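/- arXiv:1904.08680 — 2 statements merged into one kernel-verified Lean document; each statement's English description precedes it below -/
import Mathlib

section
/- Let A, B₁, B₂ be bounded operators on a complex Hilbert space H. Then R(A) ⊆ R(B₁) + R(B₂) if and only if AA* ≤ k²(B₁B₁* + B₂B₂*) for some k ≥ 0. -/
/-!
With `B : H × H → H`, `B (a, b) = B₁ a + B₂ b` on the `L²` product, `R(B) = R(B₁) + R(B₂)` and
`B B* = B₁ B₁* + B₂ B₂*`, so this is Douglas' lemma: `R(A) ⊆ R(B)` iff `‖A* x‖ ≤ k ‖B* x‖`.
If `A y = B v_y` then `⟪A* x, y⟫ = ⟪B* x, v_y⟫`, so the functionals `y ↦ ⟪A* x, y⟫ / ‖B* x‖` are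
pointwise bounded and uniform boundedness yields `k`. Conversely, under the bound
`B* x ↦ ⟪A y, x⟫` is a well-defined bounded functional on `R(B*)`; a Hahn–Banach extension of it,
represented by Riesz as `⟪v, ·⟫`, gives `B v = A y`.
-/

open ContinuousLinearMap InnerProductSpace Pointwise

theorem LinearMap.exists_strongDual_comp_eq_of_norm_le {𝕜 E F : Type*} [RCLike 𝕜]
    [NormedAddCommGroup E] [NormedSpace 𝕜 E] [AddCommGroup F] [Module 𝕜 F]
    (T : F →ₗ[𝕜] E) (φ : F →ₗ[𝕜] 𝕜) (c : ℝ) (h : ∀ x, ‖φ x‖ ≤ c * ‖T x‖) :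
    ∃ g : StrongDual 𝕜 E, ∀ x, g (T x) = φ x := by
  have hker : LinearMap.ker T ≤ LinearMap.ker φ := fun x hx => by
    simpa [LinearMap.mem_ker.mp hx] using h x
  let ψ : LinearMap.range T →ₗ[𝕜] 𝕜 := (LinearMap.ker T).liftQ φ hker ∘ₗ T.quotKerEquivRange.symm
  have hψ : ∀ x, ψ ⟨T x, LinearMap.mem_range_self T x⟩ = φ x := by simp [ψ]
  have hψ_le : ∀ z, ‖ψ z‖ ≤ c * ‖z‖ := by
    rintro ⟨_, x, rfl⟩
    simpa [hψ] using h x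
  obtain ⟨g, hg, -⟩ := exists_extension_norm_eq _ (ψ.mkContinuous c hψ_le)
  exact ⟨g, fun x => (hg _).trans (hψ x)⟩

section Douglas

variable {𝕜 E F G : Type*} [RCLike 𝕜]
  [NormedAddCommGroup E] [InnerProductSpace 𝕜 E] [CompleteSpace E]
  [NormedAddCommGroup F] [InnerProductSpace 𝕜 F] [CompleteSpace F]
  [NormedAddCommGroup G] [InnerProductSpace 𝕜 G] [CompleteSpace G]

theorem mem_range_of_norm_inner_le (B : E →L[𝕜] F) (u : F) (c : ℝ)
    (h : ∀ x, ‖⟪u, x⟫_𝕜‖ ≤ c * ‖adjoint B x‖) : u ∈ Set.range B := by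
  obtain ⟨g, hg⟩ :=
    (adjoint B).toLinearMap.exists_strongDual_comp_eq_of_norm_le (innerₛₗ 𝕜 u) c h
  refine ⟨(toDual 𝕜 E).symm g, ext_inner_right 𝕜 fun x => ?_⟩
  rw [← adjoint_inner_right, toDual_symm_apply]
  exact hg x

theorem exists_norm_adjoint_le_of_range_subset (A : G →L[𝕜] F) (B : E →L[𝕜] F)
    (h : Set.range A ⊆ Set.range B) :
    ∃ k : ℝ, 0 ≤ k ∧ ∀ x, ‖adjoint A x‖ ≤ k * ‖adjoint B x‖ := by
  choose v hv using fun y => h ⟨y, rfl⟩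
  have hinner : ∀ x y, ⟪adjoint A x, y⟫_𝕜 = ⟪adjoint B x, v y⟫_𝕜 := by
    intro x y
    rw [adjoint_inner_left, adjoint_inner_left, hv]
  -- at `adjoint B x = 0` this is `0` (as `0⁻¹ = 0`); that case is treated separately below
  let g : F → G →L[𝕜] 𝕜 := fun x => ‖adjoint B x‖⁻¹ • innerSL 𝕜 (adjoint A x)
  have hg : ∀ x, ‖g x‖ = ‖adjoint B x‖⁻¹ * ‖adjoint A x‖ := fun x => by
    rw [norm_smul, innerSL_apply_norm, norm_inv, norm_norm]
  have hpt : ∀ y, ∃ C, ∀ x, ‖g x y‖ ≤ C := fun y => ⟨‖v y‖, fun x => by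
    calc ‖g x y‖ = ‖adjoint B x‖⁻¹ * ‖⟪adjoint B x, v y⟫_𝕜‖ := by
          simp [g, norm_smul, hinner]
      _ ≤ ‖adjoint B x‖⁻¹ * (‖adjoint B x‖ * ‖v y‖) := by gcongr; exact norm_inner_le_norm _ _
      _ ≤ ‖v y‖ := by
          rw [← mul_assoc]
          exact mul_le_of_le_one_left (norm_nonneg _) inv_mul_le_one⟩
  obtain ⟨C, hC⟩ := banach_steinhaus hpt
  refine ⟨max C 0, le_max_right _ _, fun x => ?_⟩
  by_cases hx : adjoint B x = 0
  · have hAx : adjoint A x = 0 := inner_self_eq_zero.mp (by rw [hinner, hx, inner_zero_left])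
    simp [hAx, hx]
  · have hCx := hC x
    rw [hg, inv_mul_le_iff₀ (norm_pos_iff.mpr hx)] at hCx
    exact hCx.trans (by rw [mul_comm]; gcongr; exact le_max_left C 0)

theorem range_subset_range_iff_exists_norm_adjoint_le (A : G →L[𝕜] F) (B : E →L[𝕜] F) :
    Set.range A ⊆ Set.range B ↔ ∃ k : ℝ, 0 ≤ k ∧ ∀ x, ‖adjoint A x‖ ≤ k * ‖adjoint B x‖ := by
  refine ⟨exists_norm_adjoint_le_of_range_subset A B, ?_⟩
  rintro ⟨k, -, hk⟩ _ ⟨y, rfl⟩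
  refine mem_range_of_norm_inner_le B (A y) (‖y‖ * k) fun x => ?_
  calc ‖⟪A y, x⟫_𝕜‖ = ‖⟪y, adjoint A x⟫_𝕜‖ := by rw [adjoint_inner_right]
    _ ≤ ‖y‖ * ‖adjoint A x‖ := norm_inner_le_norm _ _
    _ ≤ ‖y‖ * (k * ‖adjoint B x‖) := by gcongr; exact hk x
    _ = ‖y‖ * k * ‖adjoint B x‖ := by ring

theorem isPositive_sq_smul_comp_adjoint_sub_iff {k : ℝ} (hk : 0 ≤ k) (A : G →L[𝕜] F)
    (B : E →L[𝕜] F) :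
    (((k : 𝕜) ^ 2) • (B ∘L adjoint B) - A ∘L adjoint A).IsPositive ↔
      ∀ x, ‖adjoint A x‖ ≤ k * ‖adjoint B x‖ := by
  have hsymm : (((k : 𝕜) ^ 2) • (B ∘L adjoint B) - A ∘L adjoint A).IsSymmetric :=
    ((isPositive_self_comp_adjoint B).isSymmetric.smul
      (by simp only [map_pow, RCLike.conj_ofReal])).sub (isPositive_self_comp_adjoint A).isSymmetric
  have hre : ∀ x, (((k : 𝕜) ^ 2) • (B ∘L adjoint B) - A ∘L adjoint A).reApplyInnerSelf x =
      k ^ 2 * ‖adjoint B x‖ ^ 2 - ‖adjoint A x‖ ^ 2 := fun x => by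
    simp [reApplyInnerSelf_apply, inner_sub_left, inner_smul_left, ← adjoint_inner_right]
  simp only [isPositive_def, hsymm, hre, true_and, sub_nonneg]
  refine forall_congr' fun x => ?_
  rw [← mul_pow, sq_le_sq₀ (norm_nonneg _) (by positivity)]

theorem range_subset_range_iff_exists_isPositive (A : G →L[𝕜] F) (B : E →L[𝕜] F) :
    Set.range A ⊆ Set.range B ↔ ∃ k : ℝ, 0 ≤ k ∧
      (((k : 𝕜) ^ 2) • (B ∘L adjoint B) - A ∘L adjoint A).IsPositive := by
  rw [range_subset_range_iff_exists_norm_adjoint_le]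
  exact exists_congr fun k => and_congr_right fun hk =>
    (isPositive_sq_smul_comp_adjoint_sub_iff hk A B).symm

end Douglas

namespace ContinuousLinearMap

section NormedSpace

variable {𝕜 E₁ E₂ F : Type*} [NormedField 𝕜]
  [SeminormedAddCommGroup E₁] [NormedSpace 𝕜 E₁] [SeminormedAddCommGroup E₂] [NormedSpace 𝕜 E₂]
  [SeminormedAddCommGroup F] [NormedSpace 𝕜 F]

noncomputable def coprodL2 (B₁ : E₁ →L[𝕜] F) (B₂ : E₂ →L[𝕜] F) : WithLp 2 (E₁ × E₂) →L[𝕜] F :=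
  B₁.coprod B₂ ∘L (WithLp.prodContinuousLinearEquiv 2 𝕜 E₁ E₂ : WithLp 2 (E₁ × E₂) →L[𝕜] E₁ × E₂)

@[simp]
theorem coprodL2_apply (B₁ : E₁ →L[𝕜] F) (B₂ : E₂ →L[𝕜] F) (z : WithLp 2 (E₁ × E₂)) :
    coprodL2 B₁ B₂ z = B₁ z.fst + B₂ z.snd :=
  rfl

theorem range_coprodL2 (B₁ : E₁ →L[𝕜] F) (B₂ : E₂ →L[𝕜] F) :
    Set.range (coprodL2 B₁ B₂) = Set.range B₁ + Set.range B₂ := by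
  ext u
  constructor
  · rintro ⟨z, rfl⟩
    exact ⟨_, ⟨z.fst, rfl⟩, _, ⟨z.snd, rfl⟩, rfl⟩
  · rintro ⟨_, ⟨a, rfl⟩, _, ⟨b, rfl⟩, rfl⟩
    exact ⟨WithLp.toLp 2 (a, b), rfl⟩

end NormedSpace

variable {𝕜 E₁ E₂ F : Type*} [RCLike 𝕜]
  [NormedAddCommGroup E₁] [InnerProductSpace 𝕜 E₁] [CompleteSpace E₁]
  [NormedAddCommGroup E₂] [InnerProductSpace 𝕜 E₂] [CompleteSpace E₂]
  [NormedAddCommGroup F] [InnerProductSpace 𝕜 F] [CompleteSpace F]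

theorem adjoint_coprodL2_apply (B₁ : E₁ →L[𝕜] F) (B₂ : E₂ →L[𝕜] F) (x : F) :
    adjoint (coprodL2 B₁ B₂) x = WithLp.toLp 2 (adjoint B₁ x, adjoint B₂ x) :=
  ext_inner_right 𝕜 fun z => by
    simp [adjoint_inner_left, WithLp.prod_inner_apply, inner_add_right]

theorem coprodL2_comp_adjoint (B₁ : E₁ →L[𝕜] F) (B₂ : E₂ →L[𝕜] F) :
    coprodL2 B₁ B₂ ∘L adjoint (coprodL2 B₁ B₂) = B₁ ∘L adjoint B₁ + B₂ ∘L adjoint B₂ := by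
  ext x
  simp [adjoint_coprodL2_apply]

end ContinuousLinearMap

/-- `R(A) ⊆ R(B₁) + R(B₂)` iff `A A* ≤ k² (B₁ B₁* + B₂ B₂*)` for some `k ≥ 0`. -/
theorem range_subset_sum_iff_majorization
    {H : Type*} [NormedAddCommGroup H] [InnerProductSpace ℂ H] [CompleteSpace H]
    (A B₁ B₂ : H →L[ℂ] H) :
    Set.range A ⊆ Set.range B₁ + Set.range B₂ ↔
      ∃ k : ℝ, 0 ≤ k ∧
        (((k : ℂ) ^ 2) • (B₁ ∘L adjoint B₁ + B₂ ∘L adjoint B₂)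
          - A ∘L adjoint A).IsPositive := by
  rw [← range_coprodL2, ← coprodL2_comp_adjoint]
  exact range_subset_range_iff_exists_isPositive A (coprodL2 B₁ B₂)
end

section
/- Let A, B₁, B₂ be bounded operators on a complex Hilbert space H. If R(A) ⊆ R(B₁) + R(B₂), then there exist bounded operators C₁, C₂ with A = B₁C₁ + B₂C₂. -/
/-!
The operator `B = B₁ ⊕ B₂` on the Hilbert sum `H ⊕ H` has range `R(B₁) + R(B₂)`, and its
restriction to `(ker B)ᗮ` is injective with the same range. Hence every `A x` has a unique
preimage `C x` in `(ker B)ᗮ`; `C` is linear, and bounded by the closed graph theorem because its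
graph `{(x, y) | B y = A x}` is closed. The components of `C` are `C₁` and `C₂`.
-/

open Function Pointwise

namespace ContinuousLinearMap

variable {𝕜 E F G : Type*}

section Injective

variable [NontriviallyNormedField 𝕜] [NormedAddCommGroup E] [NormedSpace 𝕜 E] [CompleteSpace E]
  [NormedAddCommGroup F] [NormedSpace 𝕜 F] [CompleteSpace F]
  [NormedAddCommGroup G] [NormedSpace 𝕜 G]

theorem exists_comp_eq_of_injective_of_range_subset {T : F →L[𝕜] G} (hT : Injective T)
    {A : E →L[𝕜] G} (h : Set.range A ⊆ Set.range T) : ∃ C : E →L[𝕜] F, T ∘L C = A := by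
  let C₀ : E →ₗ[𝕜] F := (LinearEquiv.ofInjective (T : F →ₗ[𝕜] G) hT).symm.toLinearMap ∘ₗ
    (A : E →ₗ[𝕜] G).codRestrict (LinearMap.range (T : F →ₗ[𝕜] G)) fun x ↦ h ⟨x, rfl⟩
  have hC₀ : ∀ x, T (C₀ x) = A x := fun x ↦
    congrArg Subtype.val ((LinearEquiv.ofInjective (T : F →ₗ[𝕜] G) hT).apply_symm_apply _)
  have hgraph : (C₀.graph : Set (E × F)) = {p | T p.2 = A p.1} := by
    ext ⟨x, y⟩
    simp only [SetLike.mem_coe, LinearMap.mem_graph_iff, Set.mem_ofPred_eq, ← hC₀]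
    exact hT.eq_iff.symm
  refine ⟨ofIsClosedGraph (g := C₀) ?_, ext hC₀⟩
  rw [hgraph]
  exact isClosed_eq (T.continuous.comp continuous_snd) (A.continuous.comp continuous_fst)

end Injective

section Hilbert

variable [RCLike 𝕜] [NormedAddCommGroup F] [InnerProductSpace 𝕜 F]
  [NormedAddCommGroup G] [NormedSpace 𝕜 G]

theorem injective_comp_subtypeL_orthogonal_ker (T : F →L[𝕜] G) :
    Injective (T ∘L T.kerᗮ.subtypeL) :=
  (injective_iff_map_eq_zero _).mpr fun y hy ↦
    Submodule.coe_eq_zero.mp (T.ker.inf_orthogonal_eq_bot.le ⟨hy, y.2⟩)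

theorem range_comp_subtypeL_orthogonal_ker [CompleteSpace F] (T : F →L[𝕜] G) :
    Set.range (T ∘L T.kerᗮ.subtypeL) = Set.range T := by
  have : CompleteSpace T.ker := T.isClosed_ker.completeSpace_coe
  refine subset_antisymm (fun _ ⟨y, hy⟩ ↦ ⟨y, hy⟩) ?_
  rintro _ ⟨x, rfl⟩
  refine ⟨⟨x - T.ker.starProjection x, T.ker.sub_starProjection_mem_orthogonal x⟩, ?_⟩
  have : T (T.ker.starProjection x) = 0 := T.ker.starProjection_apply_mem x
  simp [this]

theorem exists_comp_eq_of_range_subset [NormedAddCommGroup E] [NormedSpace 𝕜 E]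
    [CompleteSpace E] [CompleteSpace F] (T : F →L[𝕜] G) {A : E →L[𝕜] G}
    (h : Set.range A ⊆ Set.range T) : ∃ C : E →L[𝕜] F, T ∘L C = A := by
  obtain ⟨C, hC⟩ := exists_comp_eq_of_injective_of_range_subset
    T.injective_comp_subtypeL_orthogonal_ker (h.trans T.range_comp_subtypeL_orthogonal_ker.ge)
  exact ⟨T.kerᗮ.subtypeL ∘L C, hC⟩

end Hilbert

theorem range_coprod_eq_add {R M M₁ M₂ : Type*} [Semiring R] [TopologicalSpace M]
    [AddCommMonoid M] [Module R M] [ContinuousAdd M] [TopologicalSpace M₁] [AddCommMonoid M₁]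
    [Module R M₁] [TopologicalSpace M₂] [AddCommMonoid M₂] [Module R M₂]
    (f₁ : M₁ →L[R] M) (f₂ : M₂ →L[R] M) :
    Set.range (f₁.coprod f₂) = Set.range f₁ + Set.range f₂ := by
  ext y
  simp [Set.mem_add, eq_comm]

theorem exists_eq_comp_add_comp_of_range_subset_add {F₁ F₂ : Type*} [RCLike 𝕜]
    [NormedAddCommGroup E] [NormedSpace 𝕜 E] [CompleteSpace E]
    [NormedAddCommGroup F₁] [InnerProductSpace 𝕜 F₁] [CompleteSpace F₁]
    [NormedAddCommGroup F₂] [InnerProductSpace 𝕜 F₂] [CompleteSpace F₂]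
    [NormedAddCommGroup G] [NormedSpace 𝕜 G]
    {A : E →L[𝕜] G} {B₁ : F₁ →L[𝕜] G} {B₂ : F₂ →L[𝕜] G}
    (h : Set.range A ⊆ Set.range B₁ + Set.range B₂) :
    ∃ (C₁ : E →L[𝕜] F₁) (C₂ : E →L[𝕜] F₂), A = B₁ ∘L C₁ + B₂ ∘L C₂ := by
  let e : WithLp 2 (F₁ × F₂) →L[𝕜] F₁ × F₂ := WithLp.prodContinuousLinearEquiv 2 𝕜 F₁ F₂
  have he : Surjective e := (WithLp.prodContinuousLinearEquiv 2 𝕜 F₁ F₂).surjective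
  have hB : Set.range (B₁.coprod B₂ ∘L e) = Set.range B₁ + Set.range B₂ := by
    rw [coe_comp, Set.range_comp, he.range_eq, Set.image_univ, range_coprod_eq_add]
  obtain ⟨C, rfl⟩ := exists_comp_eq_of_range_subset _ (h.trans hB.ge)
  refine ⟨fst 𝕜 F₁ F₂ ∘L e ∘L C, snd 𝕜 F₁ F₂ ∘L e ∘L C, ?_⟩
  ext x
  simp

end ContinuousLinearMap

/-- If `R(A) ⊆ R(B₁) + R(B₂)` then `A = B₁ C₁ + B₂ C₂` for some bounded `C₁, C₂`. -/
theorem range_subset_sum_implies_factorization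
    {H : Type*} [NormedAddCommGroup H] [InnerProductSpace ℂ H] [CompleteSpace H]
    (A B₁ B₂ : H →L[ℂ] H) (h : Set.range A ⊆ Set.range B₁ + Set.range B₂) :
    ∃ C₁ C₂ : H →L[ℂ] H, A = B₁ ∘L C₁ + B₂ ∘L C₂ :=
  ContinuousLinearMap.exists_eq_comp_add_comp_of_range_subset_add h
end
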